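/- arXiv:1409.3790 — 12 statements merged into one kernel-verified Lean document; each statement's English description precedes it below -/
import Mathlib

section
/- If x is a positive rational number such that x^x is rational, then x is an integer. -/
theorem stmt_1 (x : ℚ) (hx : 0 < x) (h : ∃ q : ℚ, (x : ℝ) ^ (x : ℝ) = q) :
    ∃ n : ℤ, x = n := by
  obtain ⟨q, hq⟩ := h
  set b := x.den with hb
  set A := x.num.natAbs with hA
  have hxR : (0:ℝ) < (x:ℝ) := by exact_mod_cast hx
  have hnum : (A : ℤ) = x.num := Int.natAbs_of_nonneg (le_of_lt (Rat.num_pos.mpr hx))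
  -- key real equation
  have key : ((q ^ b : ℚ) : ℝ) = ((x ^ A : ℚ) : ℝ) := by
    push_cast
    rw [← hq, ← Real.rpow_natCast ((x:ℝ) ^ (x:ℝ)) b, ← Real.rpow_natCast (x:ℝ) A,
      ← Real.rpow_mul hxR.le]
    congr 1
    have := Rat.mul_den_eq_num x
    have : ((x * x.den : ℚ) : ℝ) = ((x.num : ℚ) : ℝ) := by rw [this]
    push_cast at this
    rw [this]
    exact_mod_cast congrArg (fun z : ℤ => (z : ℝ)) hnum.symm
  have keyQ : q ^ b = x ^ A := Rat.cast_injective key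
  have hden : q.den ^ b = b ^ A := by
    have := congrArg Rat.den keyQ
    rwa [Rat.den_pow, Rat.den_pow] at this
  have hb1 : b = 1 := by
    by_contra hb1
    obtain ⟨p, hp, hpb⟩ := Nat.exists_prime_and_dvd hb1
    have hbne : b ≠ 0 := x.den_nz
    have hfac : b * q.den.factorization p = A * b.factorization p := by
      have := congrArg (fun n => n.factorization p) hden
      simpa [Nat.factorization_pow] using this
    have hcop : Nat.Coprime b A := x.reduced.symm
    have hdvd : b ∣ b.factorization p :=
      hcop.dvd_of_dvd_mul_left ⟨q.den.factorization p, by omega⟩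
    have hpos : 0 < b.factorization p := hp.factorization_pos_of_dvd hbne hpb
    have hlt := Nat.factorization_lt p hbne
    exact absurd (Nat.le_of_dvd hpos hdvd) (not_le.mpr hlt)
  refine ⟨x.num, ?_⟩
  conv_lhs => rw [← Rat.num_div_den x]
  rw [show x.den = 1 from hb1]; simp
end

section
/- The equation x^x = 2 has no rational solution with x > 0; hence its unique real solution x > 1 is irrational. -/
/-! Write a positive rational solution of `x ^ x = n` as `x = a / b` in lowest terms.
Raising the equation to the power `b` gives `(a / b) ^ a = n ^ b`, an integer, so the
denominator `b ^ a` is `1`, i.e. `x = a` is a natural number with `a ^ a = n`.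
For `n = 2` this is impossible, since `k ^ k` is `1` for `k ≤ 1` and at least `4` for `k ≥ 2`. -/

theorem Nat.pow_self_ne_two (k : ℕ) : k ^ k ≠ 2 := by
  match k with
  | 0 | 1 => decide
  | k + 2 =>
    have : 2 ^ 2 ≤ (k + 2) ^ (k + 2) :=
      (Nat.pow_le_pow_left (by omega) 2).trans (Nat.pow_le_pow_right (by omega) (by omega))
    omega

theorem Rat.rpow_self_pow_den {q : ℚ} (hq : 0 ≤ q) :
    ((q : ℝ) ^ (q : ℝ)) ^ q.den = (q : ℝ) ^ q.num.natAbs := by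
  have hexp : (q : ℝ) * q.den = (q.num.natAbs : ℝ) := by
    rw [Nat.cast_natAbs, abs_of_nonneg (Rat.num_nonneg.mpr hq)]
    exact_mod_cast q.mul_den_eq_num
  rw [← Real.rpow_mul_natCast (by exact_mod_cast hq), hexp, Real.rpow_natCast]

theorem Rat.den_eq_one_of_pow_eq_natCast {q : ℚ} {m n : ℕ} (hm : m ≠ 0)
    (h : q ^ m = (n : ℚ)) : q.den = 1 := by
  have hden := congrArg Rat.den h
  rw [Rat.den_pow, Rat.den_natCast] at hden
  exact (pow_eq_one_iff.mp hden).resolve_right hm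

theorem Rat.exists_nat_eq_of_rpow_self_eq_natCast {q : ℚ} (hq : 0 < q) {n : ℕ}
    (h : (q : ℝ) ^ (q : ℝ) = n) : ∃ k : ℕ, q = k ∧ k ^ k = n := by
  have hpow : q ^ q.num.natAbs = ((n ^ q.den : ℕ) : ℚ) := by
    have := Rat.rpow_self_pow_den hq.le
    rw [h] at this
    exact_mod_cast this.symm
  have hnum : q.num.natAbs ≠ 0 := Int.natAbs_ne_zero.mpr (Rat.num_pos.mpr hq).ne'
  have hden : q.den = 1 := Rat.den_eq_one_of_pow_eq_natCast hnum hpow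
  have hq_eq : q = q.num.natAbs := by
    conv_lhs => rw [← Rat.coe_int_num_of_den_eq_one hden]
    rw [Nat.cast_natAbs, abs_of_nonneg (Rat.num_nonneg.mpr hq.le)]
  refine ⟨q.num.natAbs, hq_eq, ?_⟩
  rw [hden, pow_one, hq_eq] at hpow
  exact_mod_cast hpow

theorem stmt_2 :
    (¬ ∃ x : ℚ, 0 < x ∧ (x : ℝ) ^ (x : ℝ) = 2) ∧
    ∀ x : ℝ, 1 < x → x ^ x = 2 → Irrational x := by
  have no_rat : ¬ ∃ x : ℚ, 0 < x ∧ (x : ℝ) ^ (x : ℝ) = 2 := by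
    rintro ⟨q, hq, h⟩
    obtain ⟨k, -, hk⟩ := Rat.exists_nat_eq_of_rpow_self_eq_natCast (n := 2) hq (by exact_mod_cast h)
    exact Nat.pow_self_ne_two k hk
  refine ⟨no_rat, ?_⟩
  rintro x hx h ⟨q, rfl⟩
  exact no_rat ⟨q, by exact_mod_cast zero_lt_one.trans hx, h⟩
end

section
/- For every rational number q > 1 that is not of the form n^n for any positive integer n, there exists an irrational real number x > 1 such that x^x = q. -/
/-!
Since `x ↦ x ^ x` is continuous with `1 ^ 1 = 1 < q ≤ q ^ q`, the intermediate value theorem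
gives `x ∈ (1, q]` with `x ^ x = q`. If `x = a / b` in lowest terms, raising `x ^ x = q` to the
`b`-th power gives `x ^ a = q ^ b`; as `a` and `b` are coprime, `x = t ^ b` for a rational `t`,
so `b = den t ^ b`, which forces `b = 1`. Then `x` is a natural number `n` with `n ^ n = q`.
-/

open Set

theorem exists_mem_Ioc_rpow_self_eq {c : ℝ} (hc : 1 < c) : ∃ x ∈ Ioc 1 c, x ^ x = c := by
  have hcont : ContinuousOn (fun x : ℝ => x ^ x) (Icc 1 c) :=
    continuousOn_id.rpow continuousOn_id fun x hx => Or.inl (zero_lt_one.trans_le hx.1).ne'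
  have hmem : c ∈ Ioc ((1 : ℝ) ^ (1 : ℝ)) (c ^ c) := by
    refine ⟨by rwa [Real.one_rpow], ?_⟩
    calc c = c ^ (1 : ℝ) := (Real.rpow_one c).symm
      _ ≤ c ^ c := Real.rpow_le_rpow_of_exponent_le hc.le hc.le
  exact intermediate_value_Ioc hc.le hcont hmem

namespace Rat

theorem natCast_natAbs_num {r : ℚ} (hr : 0 ≤ r) : (r.num.natAbs : ℚ) = r.num := by
  rw [Nat.cast_natAbs, Int.cast_abs, abs_of_nonneg (by exact_mod_cast num_nonneg.2 hr)]

theorem den_eq_one_of_eq_pow_den {r t : ℚ} (h : r = t ^ r.den) : r.den = 1 := by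
  have hden : r.den = t.den ^ r.den := by conv_lhs => rw [h, den_pow]
  have ht : t.den = 1 := by
    by_contra ht
    have : r.den < t.den ^ r.den := Nat.lt_pow_self (by have := t.den_pos; omega)
    omega
  rw [hden, ht, one_pow]

theorem den_eq_one_of_pow_num_eq_pow_den {r q : ℚ} (h : r ^ r.num.natAbs = q ^ r.den) :
    r.den = 1 := by
  obtain ⟨t, hrt, -⟩ := (pow_eq_pow_iff_of_coprime r.reduced).1 h
  exact den_eq_one_of_eq_pow_den hrt

theorem cast_pow_natAbs_num_eq_rpow_self_pow_den {r : ℚ} (hr : 0 < r) :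
    (r : ℝ) ^ r.num.natAbs = ((r : ℝ) ^ (r : ℝ)) ^ r.den := by
  calc (r : ℝ) ^ r.num.natAbs = (r : ℝ) ^ ((r : ℝ) * r.den) := by
        rw [← Real.rpow_natCast, ← Rat.cast_natCast, natCast_natAbs_num hr.le, ← mul_den_eq_num]
        norm_cast
    _ = ((r : ℝ) ^ (r : ℝ)) ^ r.den := by rw [Real.rpow_mul (by positivity), Real.rpow_natCast]

theorem den_eq_one_of_rpow_self_eq_cast {r q : ℚ} (hr : 0 < r) (h : (r : ℝ) ^ (r : ℝ) = q) :
    r.den = 1 := by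
  refine den_eq_one_of_pow_num_eq_pow_den (q := q) ?_
  exact_mod_cast h ▸ cast_pow_natAbs_num_eq_rpow_self_pow_den hr

end Rat

theorem stmt_3 (q : ℚ) (hq : 1 < q) (h : ¬ ∃ n : ℕ, 0 < n ∧ (n : ℚ) ^ n = q) :
    ∃ x : ℝ, 1 < x ∧ Irrational x ∧ x ^ x = (q : ℝ) := by
  obtain ⟨x, ⟨hx1, -⟩, hxx⟩ := exists_mem_Ioc_rpow_self_eq (c := q) (by exact_mod_cast hq)
  refine ⟨x, hx1, ?_, hxx⟩
  rintro ⟨r, rfl⟩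
  have hr : 1 < r := by exact_mod_cast hx1
  have hnum : (r.num.natAbs : ℚ) = r := by
    rw [Rat.natCast_natAbs_num (by linarith),
      Rat.coe_int_num_of_den_eq_one (Rat.den_eq_one_of_rpow_self_eq_cast (by linarith) hxx)]
  rw [← hnum] at hr hxx
  refine h ⟨r.num.natAbs, by exact_mod_cast (zero_lt_one.trans hr), ?_⟩
  rw [Rat.cast_natCast, Real.rpow_natCast] at hxx
  exact_mod_cast hxx
end

section
/- Let α be a real algebraic integer and suppose x = a/b is a positive rational in lowest terms (a, b ∈ ℕ, gcd(a,b)=1) with x^x = α. Then b = 1, i.e. x is a positive integer. -/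
/-! Raising `x ^ x = α` to the `b`-th power gives `(a / b) ^ a = α ^ b`, a rational number that is
integral over `ℤ` and hence an integer, since `ℤ` is integrally closed. So `b ^ a ∣ a ^ a`, and
coprimality forces `b = 1`. -/

theorem Real.rpow_div_natCast_pow {x : ℝ} (hx : 0 ≤ x) (y : ℝ) {n : ℕ} (hn : n ≠ 0) :
    (x ^ (y / n)) ^ n = x ^ y := by
  rw [← Real.rpow_natCast, ← Real.rpow_mul hx, div_mul_cancel₀ _ (Nat.cast_ne_zero.mpr hn)]

theorem Rat.den_eq_one_of_isIntegral {K : Type*} [Field K] [CharZero K] {q : ℚ}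
    (hq : IsIntegral ℤ (q : K)) : q.den = 1 := by
  obtain ⟨n, rfl⟩ := IsIntegrallyClosed.isIntegral_iff.mp
    ((isIntegral_algebraMap_iff (algebraMap ℚ K).injective).mp hq)
  exact Rat.den_intCast n

theorem Nat.Coprime.eq_one_of_pow_dvd_pow {a b n : ℕ} (hab : a.Coprime b) (hn : n ≠ 0)
    (h : b ^ n ∣ a ^ n) : b = 1 :=
  (pow_eq_one_iff.mp ((hab.pow n n).symm.eq_one_of_dvd h)).resolve_right hn

theorem stmt_4 (α : ℝ) (hα : IsIntegral ℤ α) (a b : ℕ) (ha : 0 < a) (hb : 0 < b)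
    (hab : Nat.Coprime a b)
    (h : ((a : ℝ) / b) ^ ((a : ℝ) / b) = α) : b = 1 := by
  have hpow : ((((a : ℚ) / b) ^ a : ℚ) : ℝ) = α ^ b := by
    rw [← h, Real.rpow_div_natCast_pow (by positivity) _ hb.ne', Real.rpow_natCast]
    push_cast
    rfl
  have hden := Rat.den_eq_one_of_isIntegral (hpow ▸ hα.pow b)
  rw [div_pow, ← Nat.cast_pow, ← Nat.cast_pow,
    Rat.den_div_natCast_eq_one_iff _ _ (pow_ne_zero a hb.ne')] at hden
  exact hab.eq_one_of_pow_dvd_pow ha.ne' hden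
end

section
/- Let α be a real algebraic number of degree d that is not an algebraic integer, and suppose x = a/b is a positive rational in lowest terms (gcd(a,b)=1, b ≥ 1) with x^x = α. Then b ≥ 2 and b / log b ≤ d / log 2. -/
/-!
If `b ≤ 1` then `x = a / b` is a natural number and `α = x ^ x` an integer, so `b ≥ 2`. Then `α ^ b = (a / b) ^ a` is rational, so every complex
conjugate of `α` has absolute value `α`, and the constant coefficient of its minimal polynomial
shows that `α ^ d` is rational as well. Hence `α ^ n` is rational for `n = gcd b d`; writing
`b = n m`, the rational `s = α ^ n` satisfies `s ^ m = (a / b) ^ a`. Comparing `p`-adic valuations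
at a prime `p ∣ b` gives `m ∣ a v_p(b)`, and `m ∣ v_p(b)` because `m` is prime to `a`. Thus
`2 ^ m ≤ b`, i.e. `m log 2 ≤ log b`, and `b log 2 = n m log 2 ≤ d log b`.
-/

open Polynomial

theorem isIntegral_rpow_self_of_den_le_one {a b : ℕ} (hb : b ≤ 1) :
    IsIntegral ℤ (((a : ℝ) / b) ^ ((a : ℝ) / b)) := by
  obtain ⟨k, hk⟩ : ∃ k : ℕ, (a : ℝ) / b = k := by
    interval_cases b
    · exact ⟨0, by simp⟩
    · exact ⟨a, by simp⟩
  rw [hk, Real.rpow_natCast, ← Nat.cast_pow]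
  exact isIntegral_natCast _

theorem rpow_self_pow_den (a : ℕ) {b : ℕ} (hb : b ≠ 0) :
    (((a : ℝ) / b) ^ ((a : ℝ) / b)) ^ b = (((a / b : ℚ) ^ a : ℚ) : ℝ) := by
  rw [← Real.rpow_natCast, ← Real.rpow_mul (by positivity), div_mul_cancel₀ _ (by positivity),
    Real.rpow_natCast]
  push_cast
  rfl

theorem isIntegral_of_pow_eq_ratCast {K : Type*} [Field K] [CharZero K] {α : K} {k : ℕ}
    (hk : k ≠ 0) {q : ℚ} (hq : α ^ k = q) : IsIntegral ℚ α :=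
  IsIntegral.of_pow (Nat.pos_of_ne_zero hk) (hq ▸ isIntegral_algebraMap (x := q))

theorem exists_pow_gcd_eq_ratCast {K : Type*} [Field K] [CharZero K] {α : K} (hα : α ≠ 0)
    {m n : ℕ} {q r : ℚ} (hm : α ^ m = q) (hn : α ^ n = r) : ∃ s : ℚ, α ^ m.gcd n = s :=
  ⟨q ^ m.gcdA n * r ^ m.gcdB n, by
    rw [← zpow_natCast, Nat.gcd_eq_gcd_ab, zpow_add₀ hα, zpow_mul, zpow_mul, zpow_natCast,
      zpow_natCast, hm, hn]
    push_cast
    rfl⟩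

theorem norm_coeff_zero_eq_pow_natDegree {P : ℂ[X]} (hP : P.Monic) {c : ℝ}
    (h : ∀ z ∈ P.roots, ‖z‖ = c) : ‖P.coeff 0‖ = c ^ P.natDegree := by
  have hprod : ‖P.roots.prod‖ = c ^ P.natDegree := by
    rw [show ‖P.roots.prod‖ = (P.roots.map (‖·‖)).prod from
        map_multiset_prod (normHom : ℂ →*₀ ℝ) _, Multiset.map_congr rfl h, Multiset.map_const',
      Multiset.prod_replicate, IsAlgClosed.card_roots_eq_natDegree]
  rw [(IsAlgClosed.splits P).coeff_zero_eq_prod_roots_of_monic hP, norm_mul, norm_pow, norm_neg,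
    norm_one, one_pow, one_mul, hprod]

theorem norm_eq_of_aeval_minpoly_eq_zero {α : ℝ} (hα : 0 ≤ α) {k : ℕ} (hk : k ≠ 0) {q : ℚ}
    (hq : α ^ k = q) {z : ℂ} (hz : aeval z (minpoly ℚ α) = 0) : ‖z‖ = α := by
  obtain ⟨g, hg⟩ : minpoly ℚ α ∣ X ^ k - C q := minpoly.dvd ℚ α (by simp [hq])
  have hzk : z ^ k = q := by
    have := congrArg (aeval z) hg
    simp only [map_sub, map_pow, aeval_X, aeval_C, map_mul, hz, zero_mul] at this
    rw [sub_eq_zero.mp this, eq_ratCast]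
  rw [← pow_left_inj₀ (norm_nonneg z) hα hk, ← norm_pow, hzk, hq, ← Complex.ofReal_ratCast,
    Complex.norm_real, Real.norm_eq_abs, ← hq, abs_of_nonneg (by positivity)]

theorem pow_natDegree_minpoly_eq_abs_coeff_zero {α : ℝ} (hα : 0 ≤ α) {k : ℕ} (hk : k ≠ 0)
    {q : ℚ} (hq : α ^ k = q) :
    α ^ (minpoly ℚ α).natDegree = ((|(minpoly ℚ α).coeff 0| : ℚ) : ℝ) := by
  have hmonic := minpoly.monic (isIntegral_of_pow_eq_ratCast hk hq)
  have hroots : ∀ z ∈ ((minpoly ℚ α).map (algebraMap ℚ ℂ)).roots, ‖z‖ = α := fun z hz =>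
    norm_eq_of_aeval_minpoly_eq_zero hα hk hq <| by
      rwa [mem_roots (hmonic.map _).ne_zero, IsRoot, eval_map_algebraMap] at hz
  have := norm_coeff_zero_eq_pow_natDegree (hmonic.map _) hroots
  rw [coeff_map, hmonic.natDegree_map, eq_ratCast, ← Complex.ofReal_ratCast, Complex.norm_real,
    Real.norm_eq_abs] at this
  rw [← this]
  push_cast
  rfl

theorem dvd_padicValNat_of_pow_eq {a b m : ℕ} (ha : a ≠ 0) (hb : b ≠ 0) (hab : a.Coprime b)
    (hma : m.Coprime a) {s : ℚ} (hs : s ^ m = (a / b : ℚ) ^ a) (p : ℕ) [Fact p.Prime] :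
    m ∣ padicValNat p b := by
  by_cases hpb : p ∣ b
  swap
  · rw [padicValNat.eq_zero_of_not_dvd hpb]
    exact dvd_zero m
  have hpa : padicValNat p a = 0 := padicValNat.eq_zero_of_not_dvd fun hpa =>
    (Nat.Prime.not_dvd_one Fact.out) (hab ▸ Nat.dvd_gcd hpa hpb)
  have hv := congrArg (padicValRat p) hs
  rw [padicValRat.pow, padicValRat.pow, padicValRat.div (by positivity) (by positivity),
    padicValRat.of_nat, padicValRat.of_nat, hpa] at hv
  have : (m : ℤ) ∣ ((a * padicValNat p b : ℕ) : ℤ) := ⟨-padicValRat p s, by push_cast at hv ⊢; linarith⟩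
  exact hma.dvd_of_dvd_mul_left (Int.natCast_dvd_natCast.mp this)

theorem two_pow_le_of_dvd_padicValNat {b m p : ℕ} (hp : p.Prime) (hpb : p ∣ b) (hb : b ≠ 0)
    (hm : m ∣ padicValNat p b) : 2 ^ m ≤ b := by
  have : Fact p.Prime := ⟨hp⟩
  have hv : 1 ≤ padicValNat p b := one_le_padicValNat_of_dvd hb hpb
  calc 2 ^ m ≤ 2 ^ padicValNat p b := Nat.pow_le_pow_right two_pos (Nat.le_of_dvd hv hm)
    _ ≤ p ^ padicValNat p b := Nat.pow_le_pow_left hp.two_le _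
    _ ≤ b := Nat.le_of_dvd (Nat.pos_of_ne_zero hb) pow_padicValNat_dvd

theorem div_log_le_div_log_two {b n m d : ℕ} (hb : 1 < b) (hbnm : b = n * m) (hnd : n ≤ d)
    (hm : 2 ^ m ≤ b) : (b : ℝ) / Real.log b ≤ d / Real.log 2 := by
  have hlogb : 0 < Real.log b := Real.log_pos (by exact_mod_cast hb)
  have hm' : m * Real.log 2 ≤ Real.log b := by
    rw [← Real.log_pow]
    exact Real.log_le_log (by positivity) (by exact_mod_cast hm)
  rw [div_le_div_iff₀ hlogb (Real.log_pos one_lt_two)]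
  calc (b : ℝ) * Real.log 2 = n * (m * Real.log 2) := by rw [hbnm]; push_cast; ring
    _ ≤ n * Real.log b := by gcongr
    _ ≤ d * Real.log b := by gcongr

theorem stmt_5_general (α : ℝ) (d : ℕ) (hd : (minpoly ℚ α).natDegree = d)
    (hnotint : ¬ IsIntegral ℤ α) (a b : ℕ)
    (hab : Nat.Coprime a b)
    (h : ((a : ℝ) / b) ^ ((a : ℝ) / b) = α) :
    2 ≤ b ∧ (b : ℝ) / Real.log b ≤ (d : ℝ) / Real.log 2 := by
  have hb : 2 ≤ b := by
    by_contra! hb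
    exact hnotint (h ▸ isIntegral_rpow_self_of_den_le_one (by omega))
  have ha : a ≠ 0 := by
    rintro rfl
    have := (Nat.coprime_zero_left b).mp hab
    omega
  have hα : 0 < α := h ▸ Real.rpow_pos_of_pos (by positivity) _
  have hαb := h ▸ rpow_self_pow_den a (b := b) (by omega)
  have hαd := hd ▸ pow_natDegree_minpoly_eq_abs_coeff_zero hα.le (by omega) hαb
  have hd0 : d ≠ 0 :=
    hd ▸ (minpoly.natDegree_pos (isIntegral_of_pow_eq_ratCast (by omega) hαb)).ne'
  obtain ⟨s, hs⟩ := exists_pow_gcd_eq_ratCast hα.ne' hαb hαd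
  obtain ⟨m, hbm⟩ := Nat.gcd_dvd_left b d
  have hsm : s ^ m = (a / b : ℚ) ^ a := by
    have : (s : ℝ) ^ m = (((a / b : ℚ) ^ a : ℚ) : ℝ) := by rw [← hs, ← pow_mul, ← hbm, hαb]
    exact_mod_cast this
  have : Fact b.minFac.Prime := ⟨Nat.minFac_prime (by omega)⟩
  have hmv := dvd_padicValNat_of_pow_eq ha (by omega) hab
    (Nat.Coprime.coprime_dvd_left (Dvd.intro_left _ hbm.symm) hab.symm) hsm b.minFac
  have hnd : b.gcd d ≤ d := Nat.le_of_dvd (Nat.pos_of_ne_zero hd0) (Nat.gcd_dvd_right b d)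
  exact ⟨hb, div_log_le_div_log_two hb hbm hnd
    (two_pow_le_of_dvd_padicValNat Fact.out (Nat.minFac_dvd b) (by omega) hmv)⟩

theorem stmt_5 (α : ℝ) (d : ℕ) (halg : IsAlgebraic ℚ α) (hd : (minpoly ℚ α).natDegree = d)
    (hnotint : ¬ IsIntegral ℤ α) (a b : ℕ) (ha : 0 < a) (hb : 0 < b)
    (hab : Nat.Coprime a b)
    (h : ((a : ℝ) / b) ^ ((a : ℝ) / b) = α) :
    2 ≤ b ∧ (b : ℝ) / Real.log b ≤ (d : ℝ) / Real.log 2 :=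
  stmt_5_general α d hd hnotint a b hab h
end

section
/- Let p₁, ..., p_s be distinct primes and (a₁,b₁), ..., (a_s,b_s) pairs of coprime integers with each a_i ≠ 0 and b_i > 0. Let L = lcm(b₁,...,b_s). Then the polynomial X^L − p₁^{a₁ L / b₁} ··· p_s^{a_s L / b_s} is irreducible over ℚ. -/
open Polynomial

/-!
If `g` is a monic factor of `X ^ n - c` over `ℚ`, every complex root of `g` has absolute value
`|c| ^ (1 / n)`, so `|g(0)| ^ n = |c| ^ deg g`. Comparing `p`-adic valuations gives
`n ∣ deg g * v_p(c)` for every prime `p`; if no prime divisor of `n` divides all the `v_p(c)`,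
then `n ∣ deg g`, so `X ^ n - c` is irreducible. For `c = ∏ pᵢ ^ (aᵢ L / bᵢ)` we have
`v_{pᵢ}(c) = aᵢ L / bᵢ`, and a prime `q ∣ L` dividing all of these would make every `bᵢ` divide
`L / q`, since `q ∣ bᵢ` forces `q ∤ aᵢ`.
-/

theorem norm_coeff_zero_pow_eq_of_dvd_X_pow_sub_C {K : Type*} [NormedField K] [IsAlgClosed K]
    {g : K[X]} (hg : g.Monic) {n : ℕ} {c : K} (hdvd : g ∣ X ^ n - C c) :
    ‖g.coeff 0‖ ^ n = ‖c‖ ^ g.natDegree := by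
  have hsplits : g.Splits := IsAlgClosed.splits g
  have hroots : ∀ z ∈ g.roots, ‖z‖ ^ n = ‖c‖ := by
    intro z hz
    have := eval_eq_zero_of_dvd_of_eval_eq_zero hdvd ((mem_roots hg.ne_zero).1 hz)
    rw [eval_sub, eval_pow, eval_X, eval_C, sub_eq_zero] at this
    rw [← norm_pow, this]
  calc ‖g.coeff 0‖ ^ n = (g.roots.map fun z ↦ ‖z‖ ^ n).prod := by
        rw [hsplits.coeff_zero_eq_prod_roots_of_monic hg, norm_mul, norm_pow, norm_neg, norm_one,
          one_pow, one_mul, Multiset.prod_map_pow]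
        exact congrArg (· ^ n) (map_multiset_prod (normHom (α := K)) _)
    _ = ‖c‖ ^ g.natDegree := by
        rw [Multiset.map_congr rfl hroots, Multiset.map_const', Multiset.prod_replicate,
          hsplits.natDegree_eq_card_roots]

theorem abs_coeff_zero_pow_eq_of_dvd_X_pow_sub_C {g : ℚ[X]} (hg : g.Monic) {n : ℕ} {c : ℚ}
    (hdvd : g ∣ X ^ n - C c) : |g.coeff 0| ^ n = |c| ^ g.natDegree := by
  have hdvdℂ : g.map (algebraMap ℚ ℂ) ∣ X ^ n - C (c : ℂ) := by
    simpa using Polynomial.map_dvd (algebraMap ℚ ℂ) hdvd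
  have := norm_coeff_zero_pow_eq_of_dvd_X_pow_sub_C (hg.map _) hdvdℂ
  simp only [coeff_map, natDegree_map, eq_ratCast, Complex.norm_ratCast] at this
  exact_mod_cast this

lemma Nat.dvd_of_forall_prime_dvd_exists_dvd_mul {n d : ℕ} (hn : n ≠ 0)
    (h : ∀ q, q.Prime → q ∣ n → ∃ e, ¬ q ∣ e ∧ n ∣ d * e) : n ∣ d := by
  rcases eq_or_ne d 0 with rfl | hd
  · exact dvd_zero n
  rw [← Nat.factorization_prime_le_iff_dvd hn hd]
  intro q hq
  by_cases hqn : q ∣ n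
  · obtain ⟨e, hqe, hne⟩ := h q hq hqn
    have he : e ≠ 0 := by rintro rfl; exact hqe (dvd_zero q)
    calc n.factorization q ≤ (d * e).factorization q :=
          (Nat.factorization_le_iff_dvd hn (mul_ne_zero hd he)).2 hne q
      _ = d.factorization q := by
          simp [Nat.factorization_mul hd he, Nat.factorization_eq_zero_of_not_dvd hqe]
  · simp [Nat.factorization_eq_zero_of_not_dvd hqn]

lemma padicValRat_abs (p : ℕ) (q : ℚ) : padicValRat p |q| = padicValRat p q := by
  rcases abs_choice q with h | h <;> simp [h, padicValRat.neg]

theorem dvd_natDegree_of_dvd_X_pow_sub_C {n : ℕ} (hn : n ≠ 0) {c : ℚ}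
    (hval : ∀ q, q.Prime → q ∣ n → ∃ p, p.Prime ∧ ¬ (q : ℤ) ∣ padicValRat p c)
    {g : ℚ[X]} (hg : g.Monic) (hdvd : g ∣ X ^ n - C c) : n ∣ g.natDegree := by
  have hpow := abs_coeff_zero_pow_eq_of_dvd_X_pow_sub_C hg hdvd
  refine Nat.dvd_of_forall_prime_dvd_exists_dvd_mul hn fun q hq hqn ↦ ?_
  obtain ⟨p, hp, hqp⟩ := hval q hq hqn
  have := Fact.mk hp
  have hv : (n : ℤ) * padicValRat p (g.coeff 0) = g.natDegree * padicValRat p c := by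
    simpa [padicValRat_abs] using congrArg (padicValRat p) hpow
  refine ⟨(padicValRat p c).natAbs, fun h ↦ hqp (Int.ofNat_dvd_left.2 h), ?_⟩
  simpa [Int.natAbs_mul] using Int.natAbs_dvd_natAbs.2 (Dvd.intro _ hv)

theorem irreducible_X_pow_sub_C_of_forall_prime_dvd {n : ℕ} (hn : n ≠ 0) {c : ℚ}
    (hval : ∀ q, q.Prime → q ∣ n → ∃ p, p.Prime ∧ ¬ (q : ℤ) ∣ padicValRat p c) :
    Irreducible (X ^ n - C c : ℚ[X]) := by
  refine (monic_X_pow_sub_C c hn).irreducible_iff_natDegree.2 ⟨fun h ↦ ?_, fun f g hf hg hfg ↦ ?_⟩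
  · simpa [hn] using congrArg natDegree h
  have hdeg : f.natDegree + g.natDegree = n := by
    rw [← natDegree_mul hf.ne_zero hg.ne_zero, hfg, natDegree_X_pow_sub_C]
  have hdvd := dvd_natDegree_of_dvd_X_pow_sub_C hn hval hf (hfg ▸ dvd_mul_right f g)
  rcases Nat.eq_zero_or_pos f.natDegree with h | h
  · exact .inl h
  · have := Nat.le_of_dvd h hdvd
    exact .inr (by omega)

lemma padicValRat_finset_prod {p : ℕ} [Fact p.Prime] {ι : Type*} (s : Finset ι) {f : ι → ℚ}
    (hf : ∀ i ∈ s, f i ≠ 0) : padicValRat p (∏ i ∈ s, f i) = ∑ i ∈ s, padicValRat p (f i) := by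
  classical
  induction s using Finset.induction_on with
  | empty => simp
  | insert i s hi ih =>
    rw [Finset.prod_insert hi, Finset.sum_insert hi, padicValRat.mul (hf i (s.mem_insert_self i))
      (Finset.prod_ne_zero_iff.2 fun k hk ↦ hf k (Finset.mem_insert_of_mem hk)),
      ih fun k hk ↦ hf k (Finset.mem_insert_of_mem hk)]

theorem padicValRat_prod_zpow_of_injective {ι : Type*} [Fintype ι] {p : ι → ℕ}
    (hp : ∀ i, (p i).Prime) (hinj : Function.Injective p) (e : ι → ℤ) (j : ι) :
    padicValRat (p j) (∏ i, (p i : ℚ) ^ e i) = e j := by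
  have := Fact.mk (hp j)
  rw [padicValRat_finset_prod _ fun i _ ↦ zpow_ne_zero _ (mod_cast (hp i).ne_zero),
    Finset.sum_eq_single j]
  · simp [padicValRat.self (hp j).one_lt]
  · intro i _ hij
    have := Fact.mk (hp i)
    simp [padicValNat_primes (hinj.ne hij.symm)]
  · simp

theorem exists_not_dvd_mul_lcm_div {ι : Type*} [Fintype ι] (a : ι → ℤ) (b : ι → ℕ)
    (hL : Finset.univ.lcm b ≠ 0) (hcop : ∀ i, IsCoprime (a i) (b i : ℤ))
    {q : ℕ} (hq : q.Prime) (hqL : q ∣ Finset.univ.lcm b) :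
    ∃ j, ¬ (q : ℤ) ∣ a j * (Finset.univ.lcm b / b j : ℕ) := by
  set L := Finset.univ.lcm b
  have hqZ : Prime (q : ℤ) := Nat.prime_iff_prime_int.1 hq
  by_contra! h
  have hdvd (i : ι) : b i ∣ L / q := by
    have hbL : b i ∣ L := Finset.dvd_lcm (Finset.mem_univ i)
    by_cases hqb : q ∣ b i
    · have hqa : ¬ (q : ℤ) ∣ a i := fun hqa ↦
        hqZ.not_isUnit ((hcop i).isUnit_of_dvd' hqa (Int.natCast_dvd_natCast.2 hqb))
      have hq' : q ∣ L / b i :=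
        Int.natCast_dvd_natCast.1 ((hqZ.dvd_mul.1 (h i)).resolve_left hqa)
      exact Nat.dvd_div_of_mul_dvd ((Nat.div_mul_cancel hbL) ▸ Nat.mul_dvd_mul_right hq' (b i))
    · exact (Nat.Coprime.symm ((hq.coprime_iff_not_dvd).2 hqb)).dvd_of_dvd_mul_right
        ((Nat.div_mul_cancel hqL).symm ▸ hbL)
  have hLq : L ∣ L / q := Finset.lcm_dvd fun i _ ↦ hdvd i
  have hpos : 0 < L / q := Nat.div_pos (Nat.le_of_dvd (Nat.pos_of_ne_zero hL) hqL) hq.pos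
  exact (Nat.le_of_dvd hpos hLq).not_gt (Nat.div_lt_self (Nat.pos_of_ne_zero hL) hq.one_lt)

open Polynomial in
theorem stmt_8_general (s : ℕ) (p : Fin s → ℕ) (hp : ∀ i, (p i).Prime)
    (hinj : Function.Injective p)
    (a : Fin s → ℤ) (b : Fin s → ℕ) (hb : ∀ i, 0 < b i)
    (hcop : ∀ i, IsCoprime (a i) (b i : ℤ))
    (L : ℕ) (hL : L = Finset.univ.lcm b) :
    Irreducible ((X : ℚ[X]) ^ L -
      C (∏ i, (p i : ℚ) ^ (a i * (L / b i : ℕ)))) := by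
  have hL0 : Finset.univ.lcm b ≠ 0 := by
    simpa [Finset.lcm_eq_zero_iff] using fun i ↦ (hb i).ne'
  subst hL
  refine irreducible_X_pow_sub_C_of_forall_prime_dvd hL0 fun q hq hqL ↦ ?_
  obtain ⟨j, hj⟩ := exists_not_dvd_mul_lcm_div a b hL0 hcop hq hqL
  exact ⟨p j, hp j, by rwa [padicValRat_prod_zpow_of_injective hp hinj]⟩

open Polynomial in
theorem stmt_8 (s : ℕ) (p : Fin s → ℕ) (hp : ∀ i, (p i).Prime)
    (hinj : Function.Injective p)
    (a : Fin s → ℤ) (b : Fin s → ℕ) (ha : ∀ i, a i ≠ 0) (hb : ∀ i, 0 < b i)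
    (hcop : ∀ i, IsCoprime (a i) (b i : ℤ))
    (L : ℕ) (hL : L = Finset.univ.lcm b) :
    Irreducible ((X : ℚ[X]) ^ L -
      C (∏ i, (p i : ℚ) ^ (a i * (L / b i : ℕ)))) :=
  stmt_8_general s p hp hinj a b hb hcop L hL
end

section
/- Let a, b be coprime positive integers with prime factorizations a = p₁^{α₁}···p_s^{α_s} and b = q₁^{β₁}···q_t^{β_t}, and let g = gcd(b, α₁,...,α_s, β₁,...,β_t). Then the minimal polynomial over ℤ of the real number (a/b)^{a/b} is b^{a/g} X^{b/g} − a^{a/g}; in particular, (a/b)^{a/b} has degree b/g over ℚ. -/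
/-!
Put `n = b / g` and `x = (a/b)^(a/b)`. Then `x ^ n = (a/b)^(a/g) = a'/b'`, and by Gauss's lemma
everything reduces to the irreducibility of `X ^ n - a'/b'` over `ℚ`. All complex conjugates of
the positive real `x` are roots of `X ^ n - a'/b'`, hence have absolute value `x`; reading off
the constant coefficient of the minimal polynomial gives `x ^ d ∈ ℚ` for its degree `d`, hence
`x ^ gcd(d, n) ∈ ℚ`. If `d < n`, then `a'/b'` is a `p`-th power in `ℚ` for a prime `p ∣ n`.
Then `a ^ a` and `b ^ a` are `pg`-th powers, and as `pg ∣ b` is coprime to `a`, `pg` divides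
every exponent of `a` and `b`, so `pg ∣ g`: a contradiction.
-/

open Polynomial

theorem Nat.dvd_factorization_of_pow_eq_pow {m n j k : ℕ} (hkj : k.Coprime j) (h : m ^ k = n ^ j)
    (p : ℕ) : k ∣ n.factorization p :=
  hkj.dvd_of_dvd_mul_left
    ⟨m.factorization p, by simpa [mul_comm] using congr(factorization $h p).symm⟩

theorem dvd_gcd_exponents_of_pow_eq_pow {a b k m l : ℕ} (hab : a.Coprime b) (hkb : k ∣ b)
    (hm : m ^ k = a ^ a) (hl : l ^ k = b ^ a) :
    k ∣ Nat.gcd b (Nat.gcd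
      (a.factorization.support.gcd fun p => a.factorization p)
      (b.factorization.support.gcd fun p => b.factorization p)) := by
  have hka : k.Coprime a := (hab.coprime_dvd_right hkb).symm
  exact Nat.dvd_gcd hkb <| Nat.dvd_gcd
    (Finset.dvd_gcd fun p _ => Nat.dvd_factorization_of_pow_eq_pow hka hm p)
    (Finset.dvd_gcd fun p _ => Nat.dvd_factorization_of_pow_eq_pow hka hl p)

theorem Rat.exists_pow_eq_of_pow_eq_div {m n p : ℕ} (hmn : m.Coprime n) (hn : n ≠ 0) {t : ℚ}
    (h : t ^ p = m / n) : ∃ u v : ℕ, u ^ p = m ∧ v ^ p = n := by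
  have hnum : ((m : ℚ) / n).num = m := by
    simpa using Rat.num_div_eq_of_coprime (a := m) (b := n) (by positivity) (by simpa using hmn)
  have hden : ((m : ℚ) / n).den = n := by
    have := Rat.den_div_eq_of_coprime (a := m) (b := n) (by positivity) (by simpa using hmn)
    push_cast at this
    exact_mod_cast this
  refine ⟨t.num.natAbs, t.den, ?_, ?_⟩
  · rw [← Int.natAbs_pow, ← Rat.num_pow, h, hnum, Int.natAbs_natCast]
  · rw [← Rat.den_pow, h, hden]

theorem forall_pow_ne_of_forall_prime_pow_ne {M : Type*} [Monoid M] {n : ℕ} {c : M}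
    (h : ∀ p : ℕ, p.Prime → p ∣ n → ∀ t : M, t ^ p ≠ c) :
    ∀ d, d ∣ n → d ≠ 1 → ∀ t : M, t ^ d ≠ c := by
  intro d hdn hd t ht
  obtain ⟨p, hp, w, rfl⟩ := Nat.exists_prime_and_dvd hd
  exact h p hp (dvd_trans (dvd_mul_right p w) hdn) (t ^ w) (by rw [← pow_mul, mul_comm, ht])


theorem Subfield.pow_gcd_mem {L : Type*} [DivisionRing L] (S : Subfield L) {x : L} {d n : ℕ}
    (hd : x ^ d ∈ S) (hn : x ^ n ∈ S) : x ^ d.gcd n ∈ S := by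
  rcases eq_or_ne x 0 with rfl | hx
  · rcases eq_or_ne (d.gcd n) 0 with h | h
    · simp [h]
    · simp [zero_pow h]
  rw [← zpow_natCast, Nat.gcd_eq_gcd_ab, zpow_add₀ hx, zpow_mul, zpow_mul, zpow_natCast,
    zpow_natCast]
  exact S.mul_mem (S.zpow_mem hd _) (S.zpow_mem hn _)

theorem Complex.norm_coeff_zero_of_forall_norm_root {f : ℂ[X]} (hf : f.Monic) {r : ℝ}
    (h : ∀ z ∈ f.roots, ‖z‖ = r) : ‖f.coeff 0‖ = r ^ f.natDegree := by
  have hnorms : f.roots.map (‖·‖) = Multiset.replicate f.natDegree r := by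
    refine Multiset.eq_replicate.mpr ⟨by simp [IsAlgClosed.card_roots_eq_natDegree], ?_⟩
    intro r' hr'
    obtain ⟨z, hz, rfl⟩ := Multiset.mem_map.mp hr'
    exact h z hz
  rw [(IsAlgClosed.splits f).coeff_zero_eq_prod_roots_of_monic hf, norm_mul, norm_pow, norm_neg,
    norm_one, one_pow, one_mul, ← Multiset.prod_replicate, ← hnorms]
  exact map_multiset_prod (normHom : ℂ →*₀ ℝ) f.roots

section minpoly

variable {x : ℝ} {n : ℕ} {c : ℚ}

theorem isIntegral_of_pow_eq (hn : n ≠ 0) (hxn : x ^ n = c) : IsIntegral ℚ x :=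
  ⟨X ^ n - C c, monic_X_pow_sub_C c hn, by simp [hxn]⟩

theorem pow_natDegree_minpoly_mem_fieldRange (hx : 0 ≤ x) (hn : n ≠ 0) (hxn : x ^ n = c) :
    x ^ (minpoly ℚ x).natDegree ∈ (algebraMap ℚ ℝ).fieldRange := by
  set f := (minpoly ℚ x).map (algebraMap ℚ ℂ)
  have hmonic : (minpoly ℚ x).Monic := minpoly.monic (isIntegral_of_pow_eq hn hxn)
  have hroots : ∀ z ∈ f.roots, ‖z‖ = x := by
    intro z hz
    have hzn : z ^ n = ((c : ℝ) : ℂ) := by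
      have hdvd : f ∣ (X ^ n - C c).map (algebraMap ℚ ℂ) :=
        Polynomial.map_dvd _ (minpoly.dvd ℚ x (by simp [hxn]))
      simpa [sub_eq_zero] using eval_eq_zero_of_dvd_of_eval_eq_zero hdvd
        ((mem_roots (hmonic.map _).ne_zero).mp hz)
    refine (pow_left_inj₀ (norm_nonneg z) hx hn).mp ?_
    rw [← norm_pow, hzn, Complex.norm_real, ← hxn, Real.norm_eq_abs, abs_pow, abs_of_nonneg hx]
  have hcoeff := Complex.norm_coeff_zero_of_forall_norm_root (hmonic.map _) hroots
  rw [natDegree_map, coeff_map] at hcoeff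
  refine ⟨|(minpoly ℚ x).coeff 0|, ?_⟩
  rw [← hcoeff]
  simp

theorem minpoly_eq_X_pow_sub_C_of_forall_pow_ne (hx : 0 ≤ x) (hn : n ≠ 0) (hxn : x ^ n = c)
    (hc : ∀ d, d ∣ n → d ≠ 1 → ∀ t : ℚ, t ^ d ≠ c) :
    minpoly ℚ x = X ^ n - C c := by
  have hint := isIntegral_of_pow_eq hn hxn
  have hdvd : minpoly ℚ x ∣ X ^ n - C c := minpoly.dvd ℚ x (by simp [hxn])
  set d := (minpoly ℚ x).natDegree
  obtain ⟨r, hr⟩ : x ^ d.gcd n ∈ (algebraMap ℚ ℝ).fieldRange :=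
    Subfield.pow_gcd_mem _ (pow_natDegree_minpoly_mem_fieldRange hx hn hxn) ⟨c, hxn.symm⟩
  obtain ⟨m, hm⟩ := Nat.gcd_dvd_right d n
  have hm1 : m = 1 := by
    by_contra hm1
    refine hc m (Dvd.intro_left _ hm.symm) hm1 r ?_
    have : ((r ^ m : ℚ) : ℝ) = c := by
      rw [Rat.cast_pow, ← eq_ratCast (algebraMap ℚ ℝ), hr, ← pow_mul, ← hm, hxn]
    exact_mod_cast this
  have hnd : n ∣ d := by
    rw [hm, hm1, mul_one]
    exact Nat.gcd_dvd_left d n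
  refine (eq_of_monic_of_dvd_of_natDegree_le (minpoly.monic hint) (monic_X_pow_sub_C c hn) hdvd
    ?_).symm
  rw [natDegree_X_pow_sub_C]
  exact Nat.le_of_dvd (minpoly.natDegree_pos hint) hnd

end minpoly

theorem irreducible_C_mul_X_pow_sub_C_of_irreducible_rat {u v : ℤ} {n : ℕ} (hn : n ≠ 0)
    (hv : v ≠ 0) (huv : IsCoprime u v) (h : Irreducible (X ^ n - C ((u : ℚ) / v))) :
    Irreducible (C v * X ^ n - C u) := by
  have hprim : (C v * X ^ n - C u).IsPrimitive := by
    intro r hr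
    rw [C_dvd_iff_dvd_coeff] at hr
    have hv' := hr n
    have hu' := hr 0
    simp only [coeff_sub, coeff_C_mul_X_pow, coeff_C, if_pos, if_neg hn, if_neg (Ne.symm hn)]
      at hv' hu'
    exact huv.isUnit_of_dvd' (by simpa using hu') (by simpa using hv')
  rw [IsPrimitive.Int.irreducible_iff_irreducible_map_cast hprim]
  have hmap : (C v * X ^ n - C u).map (Int.castRingHom ℚ) =
      C (v : ℚ) * (X ^ n - C ((u : ℚ) / v)) := by
    rw [mul_sub, ← C_mul, mul_div_cancel₀ _ (Int.cast_ne_zero.mpr hv)]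
    simp
  rw [hmap]
  exact (irreducible_isUnit_mul (isUnit_C.mpr (Ne.isUnit (by exact_mod_cast hv)))).mpr h

theorem Real.rpow_div_natCast_pow_div {y : ℝ} (hy : 0 ≤ y) {a b g : ℕ} (hb : b ≠ 0)
    (hgb : g ∣ b) :
    (y ^ ((a : ℝ) / b)) ^ (b / g) = y ^ ((a : ℝ) / g) := by
  have hg : g ≠ 0 := by rintro rfl; exact hb (Nat.eq_zero_of_zero_dvd hgb)
  rw [← Real.rpow_natCast, ← Real.rpow_mul hy, Nat.cast_div hgb (by exact_mod_cast hg)]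
  congr 1
  field_simp

theorem div_rpow_div_eq_of_pow_eq {a b g a' b' : ℕ} (hg : g ≠ 0) (ha' : a' ^ g = a ^ a)
    (hb' : b' ^ g = b ^ a) : ((a : ℝ) / b) ^ ((a : ℝ) / g) = a' / b' := by
  have hab : (0 : ℝ) ≤ a / b := by positivity
  refine (pow_left_inj₀ (Real.rpow_nonneg hab _) (by positivity) hg).mp ?_
  rw [← Real.rpow_natCast, ← Real.rpow_mul hab, div_mul_cancel₀ _ (by exact_mod_cast hg),
    Real.rpow_natCast, div_pow, div_pow]
  norm_cast
  rw [ha', hb']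

theorem rat_pow_ne_div_of_prime_dvd {a b g a' b' p : ℕ} (hb : 0 < b) (hab : a.Coprime b)
    (hg : g = Nat.gcd b (Nat.gcd
      (a.factorization.support.gcd fun p => a.factorization p)
      (b.factorization.support.gcd fun p => b.factorization p)))
    (ha' : a' ^ g = a ^ a) (hb' : b' ^ g = b ^ a) (hab' : a'.Coprime b') (hb'0 : b' ≠ 0)
    (hp : p.Prime) (hpn : p ∣ b / g) (t : ℚ) : t ^ p ≠ a' / b' := by
  intro h
  obtain ⟨u, v, rfl, rfl⟩ := Rat.exists_pow_eq_of_pow_eq_div hab' hb'0 h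
  have hgb : g ∣ b := hg ▸ Nat.gcd_dvd_left _ _
  have hgp : g * p ∣ g := by
    have := dvd_gcd_exponents_of_pow_eq_pow hab (Nat.mul_dvd_of_dvd_div hgb hpn)
      (by rw [mul_comm, pow_mul, ha']) (by rw [mul_comm, pow_mul, hb'])
    rwa [← hg] at this
  have hg0 : 0 < g := hg ▸ Nat.gcd_pos_of_pos_left _ hb
  exact hp.ne_one (Nat.dvd_one.mp ((Nat.mul_dvd_mul_iff_left hg0).mp (by simpa using hgp)))

open Polynomial in
theorem stmt_10_general (a b : ℕ) (hb : 0 < b) (hab : Nat.Coprime a b)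
    (g : ℕ)
    (hg : g = Nat.gcd b (Nat.gcd
      (a.factorization.support.gcd fun p => a.factorization p)
      (b.factorization.support.gcd fun p => b.factorization p)))
    (a' b' : ℕ) (ha' : a' ^ g = a ^ a) (hb' : b' ^ g = b ^ a) :
    Polynomial.aeval (((a : ℝ) / b) ^ ((a : ℝ) / b))
        ((C (b' : ℤ)) * X ^ (b / g) - C (a' : ℤ)) = 0 ∧
    Irreducible ((C (b' : ℤ)) * X ^ (b / g) - C (a' : ℤ)) ∧
    (minpoly ℚ (((a : ℝ) / b) ^ ((a : ℝ) / b))).natDegree = b / g := by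
  have hg0 : 0 < g := hg ▸ Nat.gcd_pos_of_pos_left _ hb
  have hgb : g ∣ b := hg ▸ Nat.gcd_dvd_left _ _
  have hn : b / g ≠ 0 := (Nat.div_pos (Nat.le_of_dvd hb hgb) hg0).ne'
  have hb'0 : b' ≠ 0 := by
    rintro rfl
    exact pow_ne_zero a hb.ne' (by simpa [zero_pow hg0.ne'] using hb'.symm)
  have hab' : a'.Coprime b' := by
    rw [← Nat.coprime_pow_left_iff hg0, ← Nat.coprime_pow_right_iff hg0, ha', hb']
    exact hab.pow a a
  set x := ((a : ℝ) / b) ^ ((a : ℝ) / b)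
  have hxn : x ^ (b / g) = ((a' / b' : ℚ) : ℝ) := by
    rw [Real.rpow_div_natCast_pow_div (by positivity) hb.ne' hgb,
      div_rpow_div_eq_of_pow_eq hg0.ne' ha' hb']
    push_cast
    rfl
  have hmin : minpoly ℚ x = X ^ (b / g) - C (a' / b' : ℚ) :=
    minpoly_eq_X_pow_sub_C_of_forall_pow_ne (by positivity) hn hxn <|
      forall_pow_ne_of_forall_prime_pow_ne fun p hp hpn ↦
        rat_pow_ne_div_of_prime_dvd hb hab hg ha' hb' hab' hb'0 hp hpn
  refine ⟨?_, ?_, ?_⟩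
  · have : (b' : ℝ) * x ^ (b / g) = a' := by
      rw [hxn]
      push_cast
      field_simp
    simp [this]
  · refine irreducible_C_mul_X_pow_sub_C_of_irreducible_rat hn (by exact_mod_cast hb'0)
      (Nat.isCoprime_iff_coprime.mpr hab') ?_
    simpa [hmin] using minpoly.irreducible (isIntegral_of_pow_eq hn hxn)
  · rw [hmin, natDegree_X_pow_sub_C]

open Polynomial in
theorem stmt_10 (a b : ℕ) (ha : 0 < a) (hb : 0 < b) (hab : Nat.Coprime a b)
    (g : ℕ)
    (hg : g = Nat.gcd b (Nat.gcd
      (a.factorization.support.gcd fun p => a.factorization p)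
      (b.factorization.support.gcd fun p => b.factorization p)))
    (a' b' : ℕ) (ha' : a' ^ g = a ^ a) (hb' : b' ^ g = b ^ a) :
    Polynomial.aeval (((a : ℝ) / b) ^ ((a : ℝ) / b))
        ((C (b' : ℤ)) * X ^ (b / g) - C (a' : ℤ)) = 0 ∧
    Irreducible ((C (b' : ℤ)) * X ^ (b / g) - C (a' : ℤ)) ∧
    (minpoly ℚ (((a : ℝ) / b) ^ ((a : ℝ) / b))).natDegree = b / g :=
  stmt_10_general a b hb hab g hg a' b' ha' hb'
end

section
/- If a positive rational x in lowest terms a/b satisfies x^x = α for some algebraic number α, then the minimal polynomial of α over ℤ has the form s X^d − r for positive integers r, s, d. -/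
/-!
Since `(x ^ x) ^ b = x ^ a` is rational, some positive power of `α` is rational; let `d` be the
least one and `c = α ^ d`. The minimal polynomial `f` of `α` over `ℚ` divides `X ^ d - c`, hence
all its complex roots have absolute value `|α|`, so `|f(0)| = |α| ^ deg f` and `α ^ deg f = ±f(0)`
is rational. Minimality of `d` forces `deg f = d`, so `X ^ d - c` is irreducible over `ℚ`;
clearing the denominator of `c` gives a primitive, hence irreducible, integer polynomial.
-/

open Polynomial

theorem Polynomial.Monic.norm_coeff_zero_eq_pow {p : ℂ[X]} (hp : p.Monic) {ρ : ℝ}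
    (hroots : ∀ z ∈ p.roots, ‖z‖ = ρ) : ‖p.coeff 0‖ = ρ ^ p.natDegree := by
  have hsplit := IsAlgClosed.splits p
  rw [hsplit.coeff_zero_eq_prod_roots_of_monic hp, norm_mul, norm_pow, norm_neg, norm_one,
    one_pow, one_mul, ← normHom_apply, map_multiset_prod,
    Multiset.map_congr (f := normHom) rfl hroots, Multiset.map_const', Multiset.prod_replicate,
    ← hsplit.natDegree_eq_card_roots]

theorem minpoly_eq_X_pow_sub_C_of_minimal {α : ℝ} {d : ℕ} (hd : 0 < d) {c : ℚ}
    (hc : α ^ d = c) (hmin : ∀ n, 0 < n → n < d → ∀ q : ℚ, α ^ n ≠ q) :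
    minpoly ℚ α = X ^ d - C c := by
  have hroot : aeval α (X ^ d - C c) = 0 := by simp [hc]
  have hmonic : (X ^ d - C c : ℚ[X]).Monic := monic_X_pow_sub_C c hd.ne'
  have hint : IsIntegral ℚ α := ⟨_, hmonic, hroot⟩
  have hdvd : minpoly ℚ α ∣ X ^ d - C c := minpoly.dvd ℚ α hroot
  set f := minpoly ℚ α
  have hnorm : ∀ z ∈ (f.map (algebraMap ℚ ℂ)).roots, ‖z‖ = |α| := by
    intro z hz
    have hzd : z ^ d = (α : ℂ) ^ d := by
      have := (isRoot_of_mem_roots hz).dvd (Polynomial.map_dvd (algebraMap ℚ ℂ) hdvd)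
      simpa [sub_eq_zero, ← Complex.ofReal_pow, hc] using this
    have := congrArg norm hzd
    rw [norm_pow, norm_pow, Complex.norm_real, Real.norm_eq_abs] at this
    exact (pow_left_inj₀ (norm_nonneg z) (abs_nonneg α) hd.ne').mp this
  have hcoeff : |α ^ f.natDegree| = |(f.coeff 0 : ℝ)| := by
    have := (minpoly.monic hint).map (algebraMap ℚ ℂ) |>.norm_coeff_zero_eq_pow hnorm
    rw [coeff_map, natDegree_map, eq_ratCast, ← Complex.ofReal_ratCast, Complex.norm_real,
      Real.norm_eq_abs] at this
    rw [abs_pow, this]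
  have hdeg : f.natDegree = d := by
    refine le_antisymm ?_ (not_lt.mp fun hlt => ?_)
    · simpa using natDegree_le_of_dvd hdvd hmonic.ne_zero
    · rcases abs_eq_abs.mp hcoeff with h | h
      · exact hmin _ (minpoly.natDegree_pos hint) hlt _ h
      · exact hmin _ (minpoly.natDegree_pos hint) hlt (-f.coeff 0) (by simpa using h)
  exact (eq_of_monic_of_dvd_of_natDegree_le (minpoly.monic hint) hmonic hdvd
    (by rw [natDegree_X_pow_sub_C, hdeg])).symm

theorem irreducible_C_den_mul_X_pow_sub_C_num {c : ℚ} {d : ℕ} (hd : 0 < d)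
    (h : Irreducible (X ^ d - C c)) : Irreducible (C (c.den : ℤ) * X ^ d - C c.num) := by
  have hprim : (C (c.den : ℤ) * X ^ d - C c.num).IsPrimitive := by
    intro k hk
    rw [C_dvd_iff_dvd_coeff] at hk
    have hden : k ∣ c.den := by
      simpa only [coeff_sub, coeff_C_mul_X_pow, coeff_C, if_pos, hd.ne', if_false, sub_zero]
        using hk d
    have hnum : k ∣ c.num := by
      simpa only [coeff_sub, coeff_C_mul_X_pow, coeff_C, hd.ne, if_false, if_pos, zero_sub,
        dvd_neg] using hk 0
    exact (Rat.isCoprime_num_den c).isUnit_of_dvd' hnum hden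
  have hmap : (C (c.den : ℤ) * X ^ d - C c.num).map (Int.castRingHom ℚ) =
      C (c.den : ℚ) * (X ^ d - C c) := by
    rw [mul_sub, ← C_mul, mul_comm _ c, Rat.mul_den_eq_num]
    simp
  rw [IsPrimitive.Int.irreducible_iff_irreducible_map_cast hprim, hmap,
    irreducible_isUnit_mul (isUnit_C.mpr (by simp))]
  exact h

theorem exists_irreducible_C_mul_X_pow_sub_C_of_pow_eq_ratCast {α : ℝ} (hα : 0 < α) {n : ℕ}
    (hn : 0 < n) {q : ℚ} (hq : α ^ n = q) :
    ∃ r s d : ℕ, 0 < r ∧ 0 < s ∧ 0 < d ∧ aeval α (C (s : ℤ) * X ^ d - C (r : ℤ)) = 0 ∧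
      Irreducible (C (s : ℤ) * X ^ d - C (r : ℤ)) := by
  classical
  have hex : ∃ d, 0 < d ∧ ∃ c : ℚ, α ^ d = c := ⟨n, hn, q, hq⟩
  obtain ⟨hd, c, hc⟩ := Nat.find_spec hex
  have hmin : ∀ m, 0 < m → m < Nat.find hex → ∀ q : ℚ, α ^ m ≠ q :=
    fun m hm hlt q hq => Nat.find_min hex hlt ⟨hm, q, hq⟩
  have hirr : Irreducible (X ^ Nat.find hex - C c) := by
    rw [← minpoly_eq_X_pow_sub_C_of_minimal hd hc hmin]
    exact minpoly.irreducible ⟨_, monic_X_pow_sub_C c hd.ne', by simp [hc]⟩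
  have hcpos : 0 < c := by exact_mod_cast hc ▸ pow_pos hα _
  obtain ⟨r, hr⟩ := Int.eq_ofNat_of_zero_le (Rat.num_nonneg.mpr hcpos.le)
  refine ⟨r, c.den, Nat.find hex, by have := Rat.num_pos.mpr hcpos; omega, c.den_pos, hd, ?_, ?_⟩
  · rw [map_sub, map_mul, map_pow, aeval_X, aeval_C, aeval_C, algebraMap_int_eq, eq_intCast,
      eq_intCast, hc, ← hr, sub_eq_zero, mul_comm]
    exact_mod_cast Rat.mul_den_eq_num c
  · simpa [← hr] using irreducible_C_den_mul_X_pow_sub_C_num hd hirr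

open Polynomial in
theorem stmt_11_general (a b : ℕ) (ha : 0 < a) (hb : 0 < b)
    (α : ℝ) (hα : ((a : ℝ) / b) ^ ((a : ℝ) / b) = α) :
    ∃ r s d : ℕ, 0 < r ∧ 0 < s ∧ 0 < d ∧
      Polynomial.aeval α ((C (s : ℤ)) * X ^ d - C (r : ℤ)) = 0 ∧
      Irreducible ((C (s : ℤ)) * X ^ d - C (r : ℤ)) := by
  have hx : (0 : ℝ) < a / b := by positivity
  refine exists_irreducible_C_mul_X_pow_sub_C_of_pow_eq_ratCast
    (hα ▸ Real.rpow_pos_of_pos hx _) hb (q := ((a : ℚ) / b) ^ a) ?_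
  rw [← hα, ← Real.rpow_mul_natCast hx.le, div_mul_cancel₀ _ (by positivity), Real.rpow_natCast]
  push_cast
  rfl

open Polynomial in
theorem stmt_11 (a b : ℕ) (ha : 0 < a) (hb : 0 < b) (hab : Nat.Coprime a b)
    (α : ℝ) (hα : ((a : ℝ) / b) ^ ((a : ℝ) / b) = α) :
    ∃ r s d : ℕ, 0 < r ∧ 0 < s ∧ 0 < d ∧
      Polynomial.aeval α ((C (s : ℤ)) * X ^ d - C (r : ℤ)) = 0 ∧
      Irreducible ((C (s : ℤ)) * X ^ d - C (r : ℤ)) :=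
  stmt_11_general a b ha hb α hα
end

section
/- Let P ∈ ℤ[X] be a non-constant polynomial with leading coefficient ±1, and let a, b be coprime positive integers such that (a/b)^{P(a/b)} is rational. Then b = 1. -/
/-!
Write `r = a / b` and `d = deg P`. Then `N := b ^ d * P(r)` is an integer congruent to
`± a ^ d` modulo `b`, hence coprime to `b`. If `r ^ P(r) = q` is rational, raising to the power
`b ^ d` gives `q ^ (b ^ d) = r ^ N`, so `b ^ d` divides `N * v_p(r) = -N * v_p(b)` for every prime
`p ∣ b`, hence divides `v_p(b)`. But `0 < v_p(b) < b ≤ b ^ d`.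
-/

open Polynomial

theorem Polynomial.isCoprime_eval_scaleRoots {R : Type*} [CommRing R] {P : R[X]}
    (hP : IsUnit P.leadingCoeff) {a b : R} (hab : IsCoprime a b) :
    IsCoprime ((P.scaleRoots b).eval a) b := by
  have hdvd : C b ∣ P.scaleRoots b - C P.leadingCoeff * X ^ P.natDegree := by
    rw [C_dvd_iff_dvd_coeff]
    intro i
    rw [coeff_sub, coeff_scaleRoots, coeff_C_mul_X_pow]
    rcases lt_trichotomy i P.natDegree with hi | rfl | hi
    · rw [if_neg hi.ne, sub_zero]
      exact (dvd_pow_self b (Nat.sub_ne_zero_of_lt hi)).mul_left _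
    · simp
    · simp [coeff_eq_zero_of_natDegree_lt hi, hi.ne']
  obtain ⟨k, hk⟩ := by simpa using eval_dvd (x := a) hdvd
  rw [sub_eq_iff_eq_add'.mp hk]
  exact ((isCoprime_mul_unit_left_left hP _ b).mpr hab.pow_left).add_mul_left_left k

theorem Rat.pow_eq_zpow_of_rpow_eq {r q t : ℚ} {n : ℕ} {N : ℤ} (hr : 0 ≤ r) (ht : n * t = N)
    (h : (r : ℝ) ^ (t : ℝ) = q) : q ^ n = r ^ N := by
  have hreal : (q : ℝ) ^ n = (r : ℝ) ^ N := by
    rw [← h, ← Real.rpow_natCast, ← Real.rpow_mul (by exact_mod_cast hr), ← Real.rpow_intCast,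
      mul_comm, ← Rat.cast_natCast, ← Rat.cast_mul, ht, Rat.cast_intCast]
  exact_mod_cast hreal

theorem padicValRat_dvd_of_pow_eq_zpow {p : ℕ} [Fact p.Prime] {r s : ℚ} {n : ℕ} {N : ℤ}
    (hN : IsCoprime N n) (h : s ^ n = r ^ N) : (n : ℤ) ∣ padicValRat p r := by
  have hval := congrArg (padicValRat p) h
  rw [padicValRat.pow, padicValRat.zpow] at hval
  exact hN.symm.dvd_of_dvd_mul_left ⟨_, hval.symm⟩

theorem padicValRat_natCast_div_natCast {p a b : ℕ} [Fact p.Prime] (ha : ¬ p ∣ a) (hb : b ≠ 0) :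
    padicValRat p ((a : ℚ) / b) = -padicValNat p b := by
  have ha0 : a ≠ 0 := by rintro rfl; exact ha (dvd_zero p)
  rw [padicValRat.div (by exact_mod_cast ha0) (by exact_mod_cast hb), padicValRat.of_nat,
    padicValRat.of_nat, padicValNat.eq_zero_of_not_dvd ha]
  simp

theorem not_dvd_padicValNat_self {p n : ℕ} [Fact p.Prime] (hn : n ≠ 0) (hpn : p ∣ n) :
    ¬ n ∣ padicValNat p n :=
  fun h ↦ (Nat.le_of_dvd (one_le_padicValNat_of_dvd hn hpn) h).not_gt (Nat.padicValNat_lt_self hn)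

theorem stmt_12_general (P : Polynomial ℤ) (hP : 0 < P.natDegree) (hA : |P.leadingCoeff| = 1)
    (a b : ℕ) (hb : 0 < b) (hab : Nat.Coprime a b)
    (h : ∃ q : ℚ, ((a : ℝ) / b) ^ ((Polynomial.aeval ((a : ℚ) / b) P : ℚ) : ℝ) = q) :
    b = 1 := by
  by_contra hb1
  obtain ⟨p, hp, hpb⟩ := Nat.exists_prime_and_dvd hb1
  have : Fact p.Prime := ⟨hp⟩
  obtain ⟨q, hq⟩ := h
  set N := (P.scaleRoots (b : ℤ)).eval (a : ℤ)
  have hN : ((b ^ P.natDegree : ℕ) : ℚ) * aeval ((a : ℚ) / b) P = N := by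
    have := scaleRoots_eval₂_mul (Int.castRingHom ℚ) ((a : ℚ) / b) (b : ℤ) (p := P)
    rw [eq_intCast, Int.cast_natCast, mul_div_cancel₀ _ (by positivity), eval₂_at_natCast] at this
    rw [aeval_def, algebraMap_int_eq, Nat.cast_pow, ← this]
    rfl
  have hcop : IsCoprime N ((b ^ P.natDegree : ℕ) : ℤ) := by
    have hunit : IsUnit P.leadingCoeff := Int.isUnit_iff_abs_eq.mpr hA
    push_cast
    exact (isCoprime_eval_scaleRoots hunit (Nat.isCoprime_iff_coprime.mpr hab)).pow_right
  have hpow := Rat.pow_eq_zpow_of_rpow_eq (r := (a : ℚ) / b) (by positivity) hN (by simpa using hq)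
  have hdvd := padicValRat_dvd_of_pow_eq_zpow (p := p) hcop hpow
  rw [padicValRat_natCast_div_natCast (hp.coprime_iff_not_dvd.mp
    (hab.symm.coprime_dvd_left hpb)) hb.ne', dvd_neg] at hdvd
  exact not_dvd_padicValNat_self hb.ne' hpb
    ((dvd_pow_self b hP.ne').trans (by exact_mod_cast hdvd))

theorem stmt_12 (P : Polynomial ℤ) (hP : 0 < P.natDegree) (hA : |P.leadingCoeff| = 1)
    (a b : ℕ) (ha : 0 < a) (hb : 0 < b) (hab : Nat.Coprime a b)
    (h : ∃ q : ℚ, ((a : ℝ) / b) ^ ((Polynomial.aeval ((a : ℚ) / b) P : ℚ) : ℝ) = q) :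
    b = 1 :=
  stmt_12_general P hP hA a b hb hab h
end

section
/- Let P ∈ ℤ[X] be a non-constant polynomial with leading coefficient A, |A| ≥ 2, and let a, b be coprime positive integers such that (a/b)^{P(a/b)} is rational. Then b < 3|A| log₂|A|. -/
/-!
Write `q = P(a/b) = m/n` in lowest terms and `d = deg P`. The integer `b^d q` is congruent to
`A a^d` modulo `b`, and `a` is prime to `b`, so `b ∣ A n`. Since `(a/b)^(m/n)` is rational and
`gcd(m, n) = 1`, `a/b` is an `n`-th power in `ℚ`, so its denominator `b` is at least `2^n`.
Hence `b ≤ |A| n ≤ |A| log₂ b`, and `log₂ u < 2u/3` turns this into `b < 3 |A| log₂ |A|`.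
-/

open Polynomial Real

theorem logb_two_lt {u : ℝ} (hu : 0 < u) : logb 2 u < 2 * u / 3 := by
  have he : exp 1 * log u ≤ u := by simpa [exp_log hu] using exp_one_mul_le_exp (x := log u)
  have he' : 2.7182818283 < exp 1 := exp_one_gt_d9
  have hl2 : 0.6931471803 < log 2 := log_two_gt_d9
  rw [logb, div_lt_iff₀ (by positivity)]
  rcases le_or_gt (log u) 0 with h | h
  · nlinarith
  · nlinarith

theorem lt_three_mul_mul_logb_of_le_mul_logb {B x : ℝ} (hB : 0 < B) (hx : 0 < x)
    (h : x ≤ B * logb 2 x) : x < 3 * B * logb 2 B := by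
  have hsplit : logb 2 x = logb 2 B + logb 2 (x / B) := by
    rw [← logb_mul hB.ne' (div_pos hx hB).ne', mul_div_cancel₀ x hB.ne']
  have hrest : B * logb 2 (x / B) < 2 * x / 3 :=
    calc B * logb 2 (x / B) < B * (2 * (x / B) / 3) := by gcongr; exact logb_two_lt (div_pos hx hB)
      _ = 2 * x / 3 := by field_simp
  rw [hsplit] at h
  linarith

theorem C_dvd_scaleRoots_sub {R : Type*} [CommRing R] (p : R[X]) (s : R) :
    C s ∣ p.scaleRoots s - C p.leadingCoeff * X ^ p.natDegree := by
  rw [C_dvd_iff_dvd_coeff]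
  intro i
  rw [coeff_sub, coeff_scaleRoots, coeff_C_mul_X_pow]
  rcases lt_trichotomy i p.natDegree with hi | rfl | hi
  · rw [if_neg hi.ne, sub_zero]
    exact (dvd_pow_self s (Nat.sub_ne_zero_of_lt hi)).mul_left _
  · simp only [coeff_natDegree, if_true, tsub_self, pow_zero, mul_one, sub_self, dvd_zero]
  · simp [coeff_eq_zero_of_natDegree_lt hi, hi.ne']

theorem dvd_leadingCoeff_mul_den_aeval_div (P : ℤ[X]) (hP : 0 < P.natDegree) {a b : ℤ}
    (hb : b ≠ 0) (hab : IsCoprime a b) :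
    b ∣ P.leadingCoeff * (aeval ((a : ℚ) / b) P).den := by
  set q : ℚ := aeval ((a : ℚ) / b) P
  set N : ℤ := (P.scaleRoots b).eval a
  have hN : (N : ℚ) = b ^ P.natDegree * q := by
    have := scaleRoots_eval₂_mul (p := P) (Int.castRingHom ℚ) ((a : ℚ) / b) b
    rw [eq_intCast, mul_div_cancel₀ _ (Int.cast_ne_zero.mpr hb), eval₂_at_intCast] at this
    simpa [q, aeval_def] using this
  have hcross : N * q.den = b ^ P.natDegree * q.num := by
    have : (N : ℚ) * q.den = b ^ P.natDegree * q.num := by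
      rw [hN, mul_assoc, Rat.mul_den_eq_num]
    exact_mod_cast this
  have hNmod : b ∣ N - P.leadingCoeff * a ^ P.natDegree := by
    simpa [N] using eval_dvd (x := a) (C_dvd_scaleRoots_sub P b)
  have hNden : b ∣ N * q.den := hcross ▸ (dvd_pow_self b hP.ne').mul_right _
  have : b ∣ P.leadingCoeff * q.den * a ^ P.natDegree := by
    have h := dvd_sub hNden (hNmod.mul_right q.den)
    rwa [show N * q.den - (N - P.leadingCoeff * a ^ P.natDegree) * q.den
      = P.leadingCoeff * q.den * a ^ P.natDegree by ring] at h
  exact hab.symm.pow_right.dvd_of_dvd_mul_right this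

theorem exists_eq_pow_den_of_rpow_eq {r q s : ℚ} (hr : 0 ≤ r) (h : (r : ℝ) ^ (q : ℝ) = s) :
    ∃ c : ℚ, r = c ^ q.den := by
  have hpow : r ^ q.num = s ^ q.den := by
    have : ((r ^ q.num : ℚ) : ℝ) = ((s ^ q.den : ℚ) : ℝ) := by
      rw [Rat.cast_zpow, ← rpow_intCast, Rat.cast_pow, ← h, ← rpow_natCast,
        ← rpow_mul (by exact_mod_cast hr)]
      congr 1
      exact_mod_cast (Rat.mul_den_eq_num q).symm
    exact_mod_cast this
  have hmem : r ^ q.num.natAbs ∈ Set.range (· ^ q.den : ℚ → ℚ) := by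
    rcases Int.natAbs_eq q.num with he | he
    · refine ⟨s, ?_⟩
      change s ^ q.den = _
      rw [← hpow, ← zpow_natCast r, ← he]
    · refine ⟨s⁻¹, ?_⟩
      change s⁻¹ ^ q.den = _
      rw [inv_pow, ← hpow, ← zpow_neg, ← zpow_natCast r]
      congr 1
      omega
  obtain ⟨c, hc⟩ := (pow_mem_range_pow_of_coprime q.reduced r).mp hmem
  exact ⟨c, hc.symm⟩

theorem two_pow_den_le_den_of_rpow_eq {r q s : ℚ} (hr : 0 ≤ r) (h : (r : ℝ) ^ (q : ℝ) = s)
    (hr1 : 1 < r.den) : 2 ^ q.den ≤ r.den := by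
  obtain ⟨c, rfl⟩ := exists_eq_pow_den_of_rpow_eq hr h
  rw [Rat.den_pow] at hr1 ⊢
  have hc : c.den ≠ 1 := by rintro h1; simp [h1] at hr1
  exact Nat.pow_le_pow_left (by have := c.den_pos; omega) _

theorem Rat.den_natCast_div_natCast {a b : ℕ} (hb : 0 < b) (hab : Nat.Coprime a b) :
    ((a : ℚ) / b).den = b := by
  have h := Rat.den_div_eq_of_coprime (a := a) (b := b) (by omega) (by simpa using hab)
  rw [Int.cast_natCast, Int.cast_natCast] at h
  exact_mod_cast h

theorem stmt_13_general (P : Polynomial ℤ) (hP : 0 < P.natDegree) (hA : 2 ≤ |P.leadingCoeff|)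
    (a b : ℕ) (hab : Nat.Coprime a b)
    (h : ∃ q : ℚ, ((a : ℝ) / b) ^ ((Polynomial.aeval ((a : ℚ) / b) P : ℚ) : ℝ) = q) :
    (b : ℝ) < 3 * |(P.leadingCoeff : ℝ)| * Real.logb 2 |(P.leadingCoeff : ℝ)| := by
  obtain ⟨s, hs⟩ := h
  set A := P.leadingCoeff
  set q : ℚ := aeval ((a : ℚ) / b) P
  have hB : (2 : ℝ) ≤ |(A : ℝ)| := by rw [← Int.cast_abs]; exact_mod_cast hA
  rcases le_or_gt b 1 with hb1 | hb2
  · have : 1 ≤ logb 2 |(A : ℝ)| :=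
      (le_logb_iff_rpow_le one_lt_two (by positivity)).mpr (by simpa using hB)
    have : (b : ℝ) ≤ 1 := by exact_mod_cast hb1
    nlinarith
  have h2pow : 2 ^ q.den ≤ b := by
    have hden := Rat.den_natCast_div_natCast (by omega) hab
    rw [← hden] at hb2 ⊢
    exact two_pow_den_le_den_of_rpow_eq (by positivity) (by push_cast; exact hs) hb2
  have hdvd : (b : ℤ) ∣ |A| * q.den := by
    simpa [abs_mul] using (dvd_abs _ _).mpr <| dvd_leadingCoeff_mul_den_aeval_div P hP
      (a := a) (b := b) (by omega) (Nat.isCoprime_iff_coprime.mpr hab)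
  have hbA : (b : ℝ) ≤ |(A : ℝ)| * q.den := by
    rw [← Int.cast_abs]
    exact_mod_cast Int.le_of_dvd (mul_pos (by linarith) (by positivity)) hdvd
  have hlog : (q.den : ℝ) ≤ logb 2 b :=
    (le_logb_iff_rpow_le one_lt_two (by positivity)).mpr (by exact_mod_cast h2pow)
  exact lt_three_mul_mul_logb_of_le_mul_logb (by positivity) (by positivity)
    (hbA.trans (by gcongr))

theorem stmt_13 (P : Polynomial ℤ) (hP : 0 < P.natDegree) (hA : 2 ≤ |P.leadingCoeff|)
    (a b : ℕ) (ha : 0 < a) (hb : 0 < b) (hab : Nat.Coprime a b)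
    (h : ∃ q : ℚ, ((a : ℝ) / b) ^ ((Polynomial.aeval ((a : ℚ) / b) P : ℚ) : ℝ) = q) :
    (b : ℝ) < 3 * |(P.leadingCoeff : ℝ)| * Real.logb 2 |(P.leadingCoeff : ℝ)| :=
  stmt_13_general P hP hA a b hab h
end

section
/- For any positive integer m, setting x = (m/(m+1))^m and y = (m/(m+1))^{m+1}, we have x^x = y^y with x ≠ y. -/
theorem stmt_15 (m : ℕ) (hm : 0 < m)
    (x y : ℚ)
    (hx : x = ((m : ℚ) / (m + 1)) ^ m)
    (hy : y = ((m : ℚ) / (m + 1)) ^ (m + 1)) :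
    (x : ℝ) ^ (x : ℝ) = (y : ℝ) ^ (y : ℝ) ∧ x ≠ y := by
  set t : ℝ := (m : ℝ) / (m + 1) with ht
  have hm1 : (0 : ℝ) < (m : ℝ) + 1 := by positivity
  have ht0 : 0 < t := by
    apply div_pos _ hm1
    exact_mod_cast hm
  have ht1 : t < 1 := by
    rw [div_lt_one hm1]; linarith
  have hxr : (x : ℝ) = t ^ m := by
    rw [hx]; push_cast; ring
  have hyr : (y : ℝ) = t ^ (m + 1) := by
    rw [hy]; push_cast; ring
  constructor
  · have key : (m : ℝ) * (x : ℝ) = ((m : ℕ) + 1 : ℝ) * (y : ℝ) := by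
      rw [hxr, hyr, pow_succ]
      have : ((m : ℕ) + 1 : ℝ) * t = m := by
        rw [ht]; field_simp
      linear_combination (-(t ^ m)) * this
    calc (x : ℝ) ^ (x : ℝ) = (t ^ (m : ℝ)) ^ (x : ℝ) := by
            rw [hxr, Real.rpow_natCast]
      _ = t ^ ((m : ℝ) * (x : ℝ)) := by
            rw [← Real.rpow_mul ht0.le]
      _ = t ^ (((m : ℕ) + 1 : ℝ) * (y : ℝ)) := by rw [key]
      _ = (t ^ (((m : ℕ) + 1 : ℕ) : ℝ)) ^ (y : ℝ) := by
            rw [← Real.rpow_mul ht0.le]; push_cast; ring_nf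
      _ = (y : ℝ) ^ (y : ℝ) := by
            rw [Real.rpow_natCast, hyr]
  · intro h
    have : (x : ℝ) = (y : ℝ) := by exact_mod_cast h
    rw [hxr, hyr] at this
    have hlt : t ^ (m + 1) < t ^ m :=
      pow_lt_pow_right_of_lt_one₀ ht0 ht1 (Nat.lt_succ_self m)
    linarith
end

section
/- All pairs of distinct positive rational numbers (x, y) satisfying x^x = y^y are given by x = (m/(m+1))^m, y = (m/(m+1))^{m+1} for some positive integer m, up to swapping x and y. -/
/-!
For `y < x` write `x / y = p / q` in lowest terms. Taking logarithms, `x ^ x = y ^ y` together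
with `q * x = p * y` gives `x ^ p = y ^ q`, hence `(p / q) ^ p = (1 / y) ^ n` with `n = p - q`.
As `n` is coprime to `p`, the fraction `p / q` is itself an `n`-th power, so `p = c ^ n` and
`q = d ^ n`. Then `d ^ n + n = c ^ n`, which forces `n = 1`; so `p = q + 1`,
`y = (q / (q + 1)) ^ (q + 1)` and `x = (q + 1) / q * y = (q / (q + 1)) ^ q`.
-/

theorem Nat.pow_add_lt_pow {a b n : ℕ} (ha : 1 ≤ a) (hab : a < b) (hn : 2 ≤ n) :
    a ^ n + n < b ^ n := by
  induction n, hn using Nat.le_induction with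
  | base => nlinarith
  | succ n hn ih =>
    calc a ^ (n + 1) + (n + 1) ≤ a * (a ^ n + n + 1) := by rw [pow_succ]; nlinarith
      _ ≤ a * b ^ n := Nat.mul_le_mul_left a ih
      _ < b * b ^ n := Nat.mul_lt_mul_of_pos_right hab (pow_pos (by omega) n)
      _ = b ^ (n + 1) := by rw [pow_succ']

theorem Nat.le_one_of_pow_add_eq_pow {a b n : ℕ} (ha : 1 ≤ a) (h : a ^ n + n = b ^ n) :
    n ≤ 1 := by
  by_contra! hn
  have hab : a < b := lt_of_pow_lt_pow_left₀ n (Nat.zero_le b) (by omega)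
  exact (Nat.pow_add_lt_pow ha hab hn).ne h

theorem Rat.exists_eq_natCast_div_of_pos {r : ℚ} (hr : 0 < r) :
    ∃ a b : ℕ, 0 < b ∧ a.Coprime b ∧ r = a / b := by
  refine ⟨r.num.natAbs, r.den, r.den_pos, r.reduced, ?_⟩
  rw [Nat.cast_natAbs, abs_of_nonneg (Rat.num_nonneg.2 hr.le)]
  exact (Rat.num_div_den r).symm

theorem Rat.exists_eq_pow_of_div_eq_pow {a b n : ℕ} (hb : 0 < b) (hab : a.Coprime b) {t : ℚ}
    (h : (a : ℚ) / b = t ^ n) : ∃ c d : ℕ, a = c ^ n ∧ b = d ^ n := by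
  obtain ⟨hnum, hden⟩ := Rat.div_int_inj (a := a) (b := b) (c := (t ^ n).num) (d := (t ^ n).den)
    (by exact_mod_cast hb) (by exact_mod_cast (t ^ n).den_pos) (by simpa using hab)
    (by simpa using (t ^ n).reduced)
    (by rw [Int.cast_natCast, Int.cast_natCast, Int.cast_natCast, Rat.num_div_den, h])
  refine ⟨t.num.natAbs, t.den, ?_, ?_⟩
  · rw [← Int.natAbs_pow, ← Rat.num_pow, ← hnum, Int.natAbs_natCast]
  · rw [← Rat.den_pow]; exact_mod_cast hden

theorem Real.pow_eq_pow_of_rpow_self_eq {x y : ℝ} (hx : 0 < x) (hy : 0 < y) {p q : ℕ}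
    (hpq : q * x = p * y) (h : x ^ x = y ^ y) : x ^ p = y ^ q := by
  have hlog : x * log x = y * log y := by
    simpa [log_rpow hx, log_rpow hy] using congrArg log h
  have : p * log x = q * log y :=
    mul_left_cancel₀ hy.ne' (by linear_combination q * hlog - log x * hpq)
  exact log_injOn_pos (pow_pos hx p) (pow_pos hy q) (by rw [log_pow, log_pow, this])

theorem Rat.eq_one_of_div_pow_eq_pow {q n : ℕ} (hq : 0 < q) (hn : 0 < n)
    (hcop : (q + n).Coprime q) {z : ℚ} (h : (((q + n : ℕ) : ℚ) / q) ^ (q + n) = z ^ n) :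
    n = 1 := by
  have hcop' : (q + n).Coprime n :=
    Nat.coprime_add_self_left.2 (Nat.coprime_self_add_left.1 hcop).symm
  obtain ⟨t, ht, -⟩ := (pow_eq_pow_iff_of_coprime hcop').1 h
  obtain ⟨c, d, hc, hd⟩ := Rat.exists_eq_pow_of_div_eq_pow hq hcop ht
  have hd0 : 1 ≤ d := Nat.pos_of_ne_zero (by rintro rfl; rw [zero_pow hn.ne'] at hd; omega)
  exact le_antisymm (Nat.le_one_of_pow_add_eq_pow (b := c) hd0 (by omega)) hn

theorem Rat.exists_eq_of_rpow_self_eq_of_lt {x y : ℚ} (hy : 0 < y) (hyx : y < x)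
    (h : (x : ℝ) ^ (x : ℝ) = (y : ℝ) ^ (y : ℝ)) :
    ∃ m : ℕ, 0 < m ∧ x = ((m : ℚ) / (m + 1)) ^ m ∧ y = ((m : ℚ) / (m + 1)) ^ (m + 1) := by
  obtain ⟨p, q, hq, hpq, hxy⟩ := Rat.exists_eq_natCast_div_of_pos (div_pos (hy.trans hyx) hy)
  have hx : x = p / q * y := by rw [← hxy, div_mul_cancel₀ _ hy.ne']
  have hqp : q < p := by
    have : (1 : ℚ) < p / q := hxy ▸ (one_lt_div hy).2 hyx
    exact_mod_cast (one_lt_div (by positivity)).1 this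
  obtain ⟨n, rfl⟩ := Nat.exists_eq_add_of_le hqp.le
  have hpow : x ^ (q + n) = y ^ q := by
    have := Real.pow_eq_pow_of_rpow_self_eq (p := q + n) (q := q) (by exact_mod_cast hy.trans hyx)
      (by exact_mod_cast hy) (by rw [hx]; push_cast; field_simp) h
    exact_mod_cast this
  have hroot : (((q + n : ℕ) : ℚ) / q) ^ (q + n) = y⁻¹ ^ n := by
    rw [hx, mul_pow, pow_add y] at hpow
    have : (((q + n : ℕ) : ℚ) / q) ^ (q + n) * y ^ n = 1 :=
      mul_left_cancel₀ (pow_ne_zero q hy.ne') (by linear_combination hpow)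
    rw [inv_pow]
    exact eq_inv_of_mul_eq_one_left this
  obtain rfl : n = 1 := Rat.eq_one_of_div_pow_eq_pow hq (by omega) hpq hroot
  have hy' : y = ((q : ℚ) / (q + 1)) ^ (q + 1) := by
    rw [← inv_inv y, ← pow_one y⁻¹, ← hroot, ← inv_pow]
    push_cast
    rw [inv_div]
  refine ⟨q, hq, ?_, hy'⟩
  rw [hx, hy', pow_succ]
  push_cast
  field_simp

theorem stmt_16 (x y : ℚ) (hx : 0 < x) (hy : 0 < y) (hxy : x ≠ y)
    (h : (x : ℝ) ^ (x : ℝ) = (y : ℝ) ^ (y : ℝ)) :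
    ∃ m : ℕ, 0 < m ∧
      ((x = ((m : ℚ) / (m + 1)) ^ m ∧ y = ((m : ℚ) / (m + 1)) ^ (m + 1)) ∨
       (y = ((m : ℚ) / (m + 1)) ^ m ∧ x = ((m : ℚ) / (m + 1)) ^ (m + 1))) := by
  rcases hxy.lt_or_gt with hlt | hlt
  · obtain ⟨m, hm, hy', hx'⟩ := Rat.exists_eq_of_rpow_self_eq_of_lt hx hlt h.symm
    exact ⟨m, hm, .inr ⟨hy', hx'⟩⟩
  · obtain ⟨m, hm, hx', hy'⟩ := Rat.exists_eq_of_rpow_self_eq_of_lt hy hlt h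
    exact ⟨m, hm, .inl ⟨hx', hy'⟩⟩
end
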